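/- Assume w is exponentially bounded. Then for every rho in (0,infinity)^2 the supremum s(rho) = sup over mu in D_mu of (rho·mu - p(mu)) is finite and is attained at a unique point Mbar(rho) in D_mu. Moreover, if rho lies in D_rho = R(D_mu), then R(Mbar(rho)) = rho. -/

import Mathlib

/-!
Write `f(μ) = ρ·μ - p(μ)`. On `dom z` we have `exp (-f(μ)) = ∑ₖ w(k) exp (μ·k - ρ·μ)`, and
this series, taken in `[0, ∞]` on all of `ℝ²`, is lower semicontinuous. Because `ρ₁, ρ₂ > 0`,
comparing it with its terms at `k = 0, (n, 0), (0, n)` for `n > ρ₁ + ρ₂` shows that its sublevel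
sets are compact, so it has a global minimiser `μ̄ ∈ dom z`, which maximises `f`. If a first
moment diverged at `μ̄`, moving `μ̄` to `μ̄ - t (1, 1)` for a small `t > 0` would increase `f`, so
`μ̄ ∈ D_μ`.

Uniqueness is the strict convexity of `p`: by Cauchy–Schwarz `z((μ + ν)/2)² < z(μ) z(ν)`, strictly
because `exp ((ν - μ)·k)` is not constant in `k`. Finally, by Jensen's inequality `R(μ₀)` is a
subgradient of `p` at `μ₀ ∈ D_μ`, so `μ₀` maximises `f` for `ρ = R(μ₀)` and hence equals `μ̄`.
-/

open Real Set Filter Topology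

noncomputable section

/-- Euclidean norm `|k|` of a pair of naturals. -/
def knorm (k : ℕ × ℕ) : ℝ := Real.sqrt ((k.1 : ℝ) ^ 2 + (k.2 : ℝ) ^ 2)

/-- Dot product `μ·k` of a chemical potential with an occupation vector. -/
def dotNat (μ : ℝ × ℝ) (k : ℕ × ℕ) : ℝ := μ.1 * k.1 + μ.2 * k.2

/-- Summand `w(k) exp(μ·k)` of the grand-canonical partition function. -/
def zsummand (w : ℕ × ℕ → ℝ) (μ : ℝ × ℝ) (k : ℕ × ℕ) : ℝ := w k * Real.exp (dotNat μ k)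

/-- `dom z`: the set of `μ` where `z(μ) = ∑_k w(k) exp(μ·k)` is finite. -/
def domz (w : ℕ × ℕ → ℝ) : Set (ℝ × ℝ) := {μ | Summable (zsummand w μ)}

/-- `D_μ`: the set of `μ` where `∑_k k_i w(k) exp(μ·k)` is finite for `i = 1,2`. -/
def Dmu (w : ℕ × ℕ → ℝ) : Set (ℝ × ℝ) :=
  {μ | Summable (fun k : ℕ × ℕ => (k.1 : ℝ) * zsummand w μ k) ∧
       Summable (fun k : ℕ × ℕ => (k.2 : ℝ) * zsummand w μ k)}

/-- `w` is exponentially bounded: `w(k) ≤ ξ^|k|` for some `ξ > 0`. -/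
def ExpBounded (w : ℕ × ℕ → ℝ) : Prop := ∃ ξ : ℝ, 0 < ξ ∧ ∀ k : ℕ × ℕ, w k ≤ ξ ^ knorm k

/-- The grand-canonical partition function `z(μ)`. -/
def zfun (w : ℕ × ℕ → ℝ) (μ : ℝ × ℝ) : ℝ := ∑' k : ℕ × ℕ, zsummand w μ k

/-- The pressure `p(μ) = log z(μ)`. -/
def press (w : ℕ × ℕ → ℝ) (μ : ℝ × ℝ) : ℝ := Real.log (zfun w μ)

/-- The single-site grand-canonical mass function `ν¹_μ(k) = w(k) exp(μ·k)/z(μ)`. -/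
def nu1 (w : ℕ × ℕ → ℝ) (μ : ℝ × ℝ) (k : ℕ × ℕ) : ℝ := zsummand w μ k / zfun w μ

/-- Density of the first species `R₁(μ)`. -/
def R1 (w : ℕ × ℕ → ℝ) (μ : ℝ × ℝ) : ℝ := ∑' k : ℕ × ℕ, (k.1 : ℝ) * nu1 w μ k

/-- Density of the second species `R₂(μ)`. -/
def R2 (w : ℕ × ℕ → ℝ) (μ : ℝ × ℝ) : ℝ := ∑' k : ℕ × ℕ, (k.2 : ℝ) * nu1 w μ k

/-- The density map `R(μ) = (R₁(μ), R₂(μ))`. -/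
def Rmap (w : ℕ × ℕ → ℝ) (μ : ℝ × ℝ) : ℝ × ℝ := (R1 w μ, R2 w μ)

/-- Dot product of two real vectors. -/
def dotR (a b : ℝ × ℝ) : ℝ := a.1 * b.1 + a.2 * b.2

section

variable {w : ℕ × ℕ → ℝ}

lemma zsummand_pos (hw : ∀ k, 0 < w k) (μ : ℝ × ℝ) (k : ℕ × ℕ) : 0 < zsummand w μ k :=
  mul_pos (hw k) (exp_pos _)

lemma zfun_pos (hw : ∀ k, 0 < w k) {μ : ℝ × ℝ} (hμ : μ ∈ domz w) : 0 < zfun w μ :=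
  (zsummand_pos hw μ 0).trans_le <| hμ.le_tsum 0 fun k _ => (zsummand_pos hw μ k).le

lemma Dmu_subset_domz (hw : ∀ k, 0 < w k) : Dmu w ⊆ domz w := by
  rintro μ ⟨h₁, h₂⟩
  refine (Finset.summable_compl_iff {0}).mp <| ((h₁.add h₂).subtype _).of_nonneg_of_le
    (fun k => (zsummand_pos hw μ k).le) fun ⟨k, hk⟩ => ?_
  have hk : (1 : ℝ) ≤ k.1 + k.2 := by
    have : k.1 + k.2 ≠ 0 := fun h => hk (by simp_all [Prod.ext_iff])
    exact_mod_cast Nat.one_le_iff_ne_zero.mpr this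
  simp only [Function.comp_apply]
  nlinarith [zsummand_pos hw μ k]

lemma knorm_le_add (k : ℕ × ℕ) : knorm k ≤ k.1 + k.2 :=
  Real.sqrt_le_iff.mpr ⟨by positivity, by nlinarith [(k.1.cast_nonneg : (0 : ℝ) ≤ k.1),
    (k.2.cast_nonneg : (0 : ℝ) ≤ k.2)]⟩

lemma domz_nonempty (hw : ∀ k, 0 < w k) (hexp : ExpBounded w) : (domz w).Nonempty := by
  obtain ⟨ξ, hξ, hb⟩ := hexp
  set β := max (log ξ) 0
  refine ⟨(-(β + 1), -(β + 1)), ?_⟩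
  refine (summable_exp_neg_nat.mul_of_nonneg summable_exp_neg_nat (fun _ => (exp_pos _).le)
    fun _ => (exp_pos _).le).of_nonneg_of_le (fun k => (zsummand_pos hw _ k).le) fun k => ?_
  have hwk : w k ≤ exp (β * (k.1 + k.2)) := by
    calc w k ≤ ξ ^ knorm k := hb k
      _ = exp (log ξ * knorm k) := rpow_def_of_pos hξ _
      _ ≤ exp (β * (k.1 + k.2)) := exp_le_exp.mpr <|
        (mul_le_mul_of_nonneg_right (le_max_left _ _) (Real.sqrt_nonneg _)).trans
          (mul_le_mul_of_nonneg_left (knorm_le_add k) (le_max_right _ _))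
  calc zsummand w _ k ≤ exp (β * (k.1 + k.2)) * exp (dotNat (-(β + 1), -(β + 1)) k) :=
        mul_le_mul_of_nonneg_right hwk (exp_pos _).le
    _ = exp (-k.1) * exp (-k.2) := by
        rw [← exp_add, ← exp_add, dotNat]; ring_nf

lemma sqrt_mul_le_add_div_two {x y : ℝ} (hx : 0 ≤ x) (hy : 0 ≤ y) : √(x * y) ≤ (x + y) / 2 :=
  Real.sqrt_le_iff.mpr ⟨by positivity, by nlinarith [sq_nonneg (x - y)]⟩

lemma summable_sqrt_mul {ι : Type*} {a b : ι → ℝ} (ha : ∀ i, 0 ≤ a i) (hb : ∀ i, 0 ≤ b i)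
    (hsa : Summable a) (hsb : Summable b) : Summable fun i => √(a i * b i) :=
  ((hsa.add hsb).div_const 2).of_nonneg_of_le (fun _ => Real.sqrt_nonneg _)
    fun i => sqrt_mul_le_add_div_two (ha i) (hb i)

lemma two_mul_sqrt_mul_mul_sqrt_mul {a b A B : ℝ} (ha : 0 ≤ a) (hb : 0 ≤ b) (hA : 0 ≤ A)
    (hB : 0 ≤ B) : 2 * (√(a * b) * √(A * B)) = a * B + b * A - (√(a * B) - √(b * A)) ^ 2 := by
  rw [sub_sq, Real.sq_sqrt (mul_nonneg ha hB), Real.sq_sqrt (mul_nonneg hb hA), mul_assoc 2,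
    ← Real.sqrt_mul (mul_nonneg ha hB), ← Real.sqrt_mul (mul_nonneg ha hb)]
  ring_nf

lemma sq_tsum_sqrt_mul_lt {ι : Type*} {a b : ι → ℝ} (ha : ∀ i, 0 ≤ a i) (hb : ∀ i, 0 ≤ b i)
    (hsa : Summable a) (hsb : Summable b) (hab : ∃ i j, a i * b j ≠ a j * b i) :
    (∑' i, √(a i * b i)) ^ 2 < (∑' i, a i) * ∑' i, b i := by
  set A := ∑' i, a i
  set B := ∑' i, b i
  have hA : 0 ≤ A := tsum_nonneg ha
  have hB : 0 ≤ B := tsum_nonneg hb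
  have hle : ∀ i, 2 * (√(a i * b i) * √(A * B)) ≤ a i * B + b i * A := fun i => by
    rw [two_mul_sqrt_mul_mul_sqrt_mul (ha i) (hb i) hA hB]
    nlinarith [sq_nonneg (√(a i * B) - √(b i * A))]
  obtain ⟨i, hi⟩ : ∃ i, a i * B ≠ b i * A := by
    by_contra! h
    obtain ⟨i, j, hij⟩ := hab
    have hA0 : A = 0 := by
      refine (mul_eq_zero.mp ?_).resolve_right (sub_ne_zero.mpr hij)
      linear_combination a j * h i - a i * h j
    have hai : a i = 0 := le_antisymm (hA0 ▸ hsa.le_tsum i fun k _ => ha k) (ha i)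
    have haj : a j = 0 := le_antisymm (hA0 ▸ hsa.le_tsum j fun k _ => ha k) (ha j)
    simp [hai, haj] at hij
  have hlt : 2 * (√(a i * b i) * √(A * B)) < a i * B + b i * A := by
    have hne : √(a i * B) ≠ √(b i * A) :=
      fun h => hi ((Real.sqrt_inj (mul_nonneg (ha i) hB) (mul_nonneg (hb i) hA)).mp h)
    rw [two_mul_sqrt_mul_mul_sqrt_mul (ha i) (hb i) hA hB]
    nlinarith [sq_pos_of_ne_zero (sub_ne_zero.mpr hne)]
  have hsum : 2 * ((∑' i, √(a i * b i)) * √(A * B)) < 2 * (A * B) := by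
    have := Summable.tsum_lt_tsum (f := fun i => 2 * (√(a i * b i) * √(A * B)))
      hle hlt (((summable_sqrt_mul ha hb hsa hsb).mul_right _).mul_left 2)
      ((hsa.mul_right B).add (hsb.mul_right A))
    rwa [tsum_mul_left, tsum_mul_right, (hsa.mul_right B).tsum_add (hsb.mul_right A),
      tsum_mul_right, tsum_mul_right, mul_comm B A, ← two_mul] at this
  have hS : 0 ≤ ∑' i, √(a i * b i) := tsum_nonneg fun i => Real.sqrt_nonneg _
  have hlt' : ∑' i, √(a i * b i) < √(A * B) := by
    nlinarith [Real.sq_sqrt (mul_nonneg hA hB), Real.sqrt_nonneg (A * B)]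
  calc (∑' i, √(a i * b i)) ^ 2 < √(A * B) ^ 2 := pow_lt_pow_left₀ hlt' hS two_ne_zero
    _ = A * B := Real.sq_sqrt (mul_nonneg hA hB)

lemma zsummand_midpoint (hw : ∀ k, 0 < w k) (μ ν : ℝ × ℝ) (k : ℕ × ℕ) :
    zsummand w ((μ.1 + ν.1) / 2, (μ.2 + ν.2) / 2) k = √(zsummand w μ k * zsummand w ν k) := by
  refine ((Real.sqrt_eq_iff_mul_self_eq_of_pos (zsummand_pos hw _ k)).mpr ?_).symm
  simp only [zsummand]
  calc _ = w k * w k * exp (dotNat ((μ.1 + ν.1) / 2, (μ.2 + ν.2) / 2) k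
          + dotNat ((μ.1 + ν.1) / 2, (μ.2 + ν.2) / 2) k) := by rw [exp_add]; ring
    _ = w k * w k * exp (dotNat μ k + dotNat ν k) := by simp only [dotNat]; ring_nf
    _ = _ := by rw [exp_add]; ring

lemma midpoint_mem_Dmu (hw : ∀ k, 0 < w k) {μ ν : ℝ × ℝ} (hμ : μ ∈ Dmu w) (hν : ν ∈ Dmu w) :
    ((μ.1 + ν.1) / 2, (μ.2 + ν.2) / 2) ∈ Dmu w := by
  have key : ∀ g : ℕ × ℕ → ℝ, (∀ k, 0 ≤ g k) → Summable (fun k => g k * zsummand w μ k) →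
      Summable (fun k => g k * zsummand w ν k) →
      Summable (fun k => g k * zsummand w ((μ.1 + ν.1) / 2, (μ.2 + ν.2) / 2) k) := by
    intro g hg hgμ hgν
    refine ((hgμ.add hgν).div_const 2).of_nonneg_of_le
      (fun k => mul_nonneg (hg k) (zsummand_pos hw _ k).le) fun k => ?_
    calc g k * zsummand w _ k
        ≤ g k * ((zsummand w μ k + zsummand w ν k) / 2) := by
          rw [zsummand_midpoint hw]
          exact mul_le_mul_of_nonneg_left (sqrt_mul_le_add_div_two
            (zsummand_pos hw μ k).le (zsummand_pos hw ν k).le) (hg k)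
      _ = _ := by ring
  exact ⟨key _ (fun _ => Nat.cast_nonneg _) hμ.1 hν.1, key _ (fun _ => Nat.cast_nonneg _) hμ.2 hν.2⟩

lemma two_mul_press_midpoint_lt (hw : ∀ k, 0 < w k) {μ ν : ℝ × ℝ} (hμ : μ ∈ domz w)
    (hν : ν ∈ domz w) (hne : μ ≠ ν) :
    2 * press w ((μ.1 + ν.1) / 2, (μ.2 + ν.2) / 2) < press w μ + press w ν := by
  have hmid : zsummand w ((μ.1 + ν.1) / 2, (μ.2 + ν.2) / 2) =
      fun k => √(zsummand w μ k * zsummand w ν k) := funext (zsummand_midpoint hw μ ν)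
  have hsqrt := summable_sqrt_mul (fun k => (zsummand_pos hw μ k).le)
    (fun k => (zsummand_pos hw ν k).le) hμ hν
  -- the ratio `zsummand w ν k / zsummand w μ k = exp ((ν - μ)·k)` is not constant in `k`
  have hprop : ∃ i j, zsummand w μ i * zsummand w ν j ≠ zsummand w μ j * zsummand w ν i := by
    have hdot : ∀ j, zsummand w μ 0 * zsummand w ν j = zsummand w μ j * zsummand w ν 0 →
        dotNat μ j = dotNat ν j := fun j h => by
      have hdot0 : ∀ μ : ℝ × ℝ, dotNat μ 0 = 0 := fun μ => by simp [dotNat]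
      simp only [zsummand, hdot0, exp_zero, mul_one] at h
      exact exp_injective (mul_left_cancel₀ (mul_pos (hw 0) (hw j)).ne' (by linear_combination -h))
    by_contra! h
    exact hne (Prod.ext (by simpa [dotNat] using hdot (1, 0) (h 0 _))
      (by simpa [dotNat] using hdot (0, 1) (h 0 _)))
  have hlt : zfun w ((μ.1 + ν.1) / 2, (μ.2 + ν.2) / 2) ^ 2 < zfun w μ * zfun w ν := by
    rw [zfun, hmid]
    exact sq_tsum_sqrt_mul_lt (fun k => (zsummand_pos hw μ k).le)
      (fun k => (zsummand_pos hw ν k).le) hμ hν hprop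
  have hzmid : 0 < zfun w ((μ.1 + ν.1) / 2, (μ.2 + ν.2) / 2) :=
    zfun_pos hw (show Summable _ from hmid ▸ hsqrt)
  have := log_lt_log (pow_pos hzmid 2) hlt
  rw [log_pow, log_mul (zfun_pos hw hμ).ne' (zfun_pos hw hν).ne'] at this
  exact_mod_cast this

lemma eq_of_isMaxOn_Dmu (hw : ∀ k, 0 < w k) {ρ μ ν : ℝ × ℝ} (hμ : μ ∈ Dmu w) (hν : ν ∈ Dmu w)
    (hμmax : IsMaxOn (fun μ => dotR ρ μ - press w μ) (Dmu w) μ)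
    (hνmax : IsMaxOn (fun μ => dotR ρ μ - press w μ) (Dmu w) ν) : μ = ν := by
  by_contra hne
  have hmid := isMaxOn_iff.mp hμmax _ (midpoint_mem_Dmu hw hμ hν)
  have hνμ := isMaxOn_iff.mp hνmax μ hμ
  have hp := two_mul_press_midpoint_lt hw (Dmu_subset_domz hw hμ) (Dmu_subset_domz hw hν) hne
  have hdot : dotR ρ ((μ.1 + ν.1) / 2, (μ.2 + ν.2) / 2) = (dotR ρ μ + dotR ρ ν) / 2 := by
    simp only [dotR]; ring
  simp only [hdot] at hmid hνμ
  linarith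

lemma exp_mul_tsum_le_tsum_exp_mul {ι : Type*} {a x : ι → ℝ} (ha : ∀ i, 0 ≤ a i)
    (hsa : Summable a) (hsxa : Summable fun i => x i * a i)
    (hsea : Summable fun i => exp (x i) * a i) {m : ℝ} (hm : ∑' i, x i * a i = m * ∑' i, a i) :
    exp m * ∑' i, a i ≤ ∑' i, exp (x i) * a i :=
  calc exp m * ∑' i, a i = ∑' i, exp m * (a i + (x i * a i - m * a i)) := by
        rw [tsum_mul_left, hsa.tsum_add (hsxa.sub (hsa.mul_left m)),
          hsxa.tsum_sub (hsa.mul_left m), hm, tsum_mul_left]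
        ring
    _ ≤ ∑' i, exp (x i) * a i := by
        refine Summable.tsum_le_tsum (fun i => ?_)
          ((hsa.add (hsxa.sub (hsa.mul_left m))).mul_left _) hsea
        have htangent : exp m * (x i - m + 1) ≤ exp (x i) := by
          simpa [← exp_add] using mul_le_mul_of_nonneg_left (add_one_le_exp (x i - m))
            (exp_pos m).le
        nlinarith [ha i]

lemma R1_mul_zfun (hw : ∀ k, 0 < w k) {μ : ℝ × ℝ} (hμ : μ ∈ domz w) :
    R1 w μ * zfun w μ = ∑' k : ℕ × ℕ, (k.1 : ℝ) * zsummand w μ k := by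
  simp only [R1, nu1, ← mul_div_assoc, tsum_div_const]
  exact div_mul_cancel₀ _ (zfun_pos hw hμ).ne'

lemma R2_mul_zfun (hw : ∀ k, 0 < w k) {μ : ℝ × ℝ} (hμ : μ ∈ domz w) :
    R2 w μ * zfun w μ = ∑' k : ℕ × ℕ, (k.2 : ℝ) * zsummand w μ k := by
  simp only [R2, nu1, ← mul_div_assoc, tsum_div_const]
  exact div_mul_cancel₀ _ (zfun_pos hw hμ).ne'

lemma press_add_dotR_Rmap_le (hw : ∀ k, 0 < w k) {μ₀ μ : ℝ × ℝ} (hμ₀ : μ₀ ∈ Dmu w)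
    (hμ : μ ∈ domz w) :
    press w μ₀ + (dotR (Rmap w μ₀) μ - dotR (Rmap w μ₀) μ₀) ≤ press w μ := by
  have hμ₀z := Dmu_subset_domz hw hμ₀
  have hx : (fun k => (dotNat μ k - dotNat μ₀ k) * zsummand w μ₀ k) = fun k : ℕ × ℕ =>
      (μ.1 - μ₀.1) * ((k.1 : ℝ) * zsummand w μ₀ k) + (μ.2 - μ₀.2) * ((k.2 : ℝ) * zsummand w μ₀ k) :=
    funext fun k => by simp only [dotNat]; ring
  have hs₁ := hμ₀.1.mul_left (μ.1 - μ₀.1)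
  have hs₂ := hμ₀.2.mul_left (μ.2 - μ₀.2)
  have hex : (fun k => exp (dotNat μ k - dotNat μ₀ k) * zsummand w μ₀ k) = zsummand w μ :=
    funext fun k => by rw [zsummand, zsummand, exp_sub]; field_simp
  have hjensen := exp_mul_tsum_le_tsum_exp_mul (fun k => (zsummand_pos hw μ₀ k).le) hμ₀z
    (hx ▸ hs₁.add hs₂) (hex ▸ hμ) (m := dotR (Rmap w μ₀) μ - dotR (Rmap w μ₀) μ₀) (by
      rw [hx, hs₁.tsum_add hs₂, tsum_mul_left, tsum_mul_left, ← R1_mul_zfun hw hμ₀z,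
        ← R2_mul_zfun hw hμ₀z]
      simp only [dotR, Rmap, zfun]
      ring)
  rw [hex, ← zfun, ← zfun] at hjensen
  have := log_le_log (by positivity [zfun_pos hw hμ₀z]) hjensen
  rwa [log_mul (exp_pos _).ne' (zfun_pos hw hμ₀z).ne', log_exp, add_comm] at this

lemma isMaxOn_Rmap (hw : ∀ k, 0 < w k) {μ₀ : ℝ × ℝ} (hμ₀ : μ₀ ∈ Dmu w) :
    IsMaxOn (fun μ => dotR (Rmap w μ₀) μ - press w μ) (Dmu w) μ₀ :=
  isMaxOn_iff.mpr fun μ hμ => by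
    linarith [press_add_dotR_Rmap_le hw hμ₀ (Dmu_subset_domz hw hμ)]

lemma half_le_one_sub_exp_neg {x : ℝ} (hx₀ : 0 ≤ x) (hx₁ : x ≤ 1) : x / 2 ≤ 1 - exp (-x) := by
  have h : exp (-x) * (x + 1) ≤ 1 := by
    simpa [← exp_add] using mul_le_mul_of_nonneg_left (add_one_le_exp x) (exp_pos (-x)).le
  nlinarith [mul_nonneg hx₀ (sub_nonneg.mpr hx₁), exp_pos (-x)]

lemma exists_tsum_exp_neg_mul_lt {ι : Type*} {a m : ι → ℝ} (ha : ∀ i, 0 ≤ a i)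
    (hm : ∀ i, 0 ≤ m i) (hsa : Summable a) (hma : ¬ Summable fun i => m i * a i) (c : ℝ) :
    ∃ t > 0, ∑' i, exp (-(t * m i)) * a i < exp (-(t * c)) * ∑' i, a i := by
  set A := ∑' i, a i
  obtain ⟨F, hF⟩ : ∃ F : Finset ι, 2 * c * A < ∑ i ∈ F, m i * a i := by
    by_contra! h
    exact hma (summable_of_sum_le (fun i => mul_nonneg (hm i) (ha i)) h)
  have hmF : 0 ≤ ∑ i ∈ F, m i := Finset.sum_nonneg fun i _ => hm i
  set t := 1 / (1 + ∑ i ∈ F, m i)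
  have ht : 0 < t := by positivity
  have htm : ∀ i ∈ F, t * m i ≤ 1 := fun i hi => by
    rw [one_div_mul_eq_div, div_le_one (by positivity)]
    linarith [Finset.single_le_sum (fun j _ => hm j) hi]
  have hle : ∀ i, exp (-(t * m i)) * a i ≤ a i := fun i =>
    mul_le_of_le_one_left (ha i) (exp_le_one_iff.mpr (by nlinarith [hm i]))
  have hsb : Summable fun i => exp (-(t * m i)) * a i :=
    hsa.of_nonneg_of_le (fun i => mul_nonneg (exp_pos _).le (ha i)) hle
  have hgain : t / 2 * ∑ i ∈ F, m i * a i ≤ A - ∑' i, exp (-(t * m i)) * a i :=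
    calc t / 2 * ∑ i ∈ F, m i * a i
        ≤ ∑ i ∈ F, (a i - exp (-(t * m i)) * a i) := by
          rw [Finset.mul_sum]
          refine Finset.sum_le_sum fun i hi => ?_
          have := half_le_one_sub_exp_neg (mul_nonneg ht.le (hm i)) (htm i hi)
          nlinarith [ha i]
      _ ≤ ∑' i, (a i - exp (-(t * m i)) * a i) :=
          (hsa.sub hsb).sum_le_tsum F fun i _ => sub_nonneg.mpr (hle i)
      _ = A - ∑' i, exp (-(t * m i)) * a i := hsa.tsum_sub hsb
  have hA : 0 ≤ A := tsum_nonneg ha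
  have htF := mul_lt_mul_of_pos_left hF (half_pos ht)
  have hexp := mul_le_mul_of_nonneg_right (add_one_le_exp (-(t * c))) hA
  exact ⟨t, ht, by linarith⟩

lemma zsummand_shift (μ : ℝ × ℝ) (t : ℝ) (k : ℕ × ℕ) :
    zsummand w (μ.1 - t, μ.2 - t) k = exp (-(t * (k.1 + k.2))) * zsummand w μ k := by
  simp only [zsummand, dotNat]
  rw [mul_left_comm, ← exp_add]
  ring_nf

lemma exists_lt_of_notMem_Dmu (hw : ∀ k, 0 < w k) (ρ : ℝ × ℝ) {μ : ℝ × ℝ} (hμ : μ ∈ domz w)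
    (hμ' : μ ∉ Dmu w) : ∃ μ' ∈ domz w, dotR ρ μ - press w μ < dotR ρ μ' - press w μ' := by
  have hmoment : ¬ Summable fun k : ℕ × ℕ => ((k.1 : ℝ) + k.2) * zsummand w μ k := fun h =>
    hμ' ⟨h.of_nonneg_of_le (fun k => by positivity [zsummand_pos hw μ k])
        fun k => by nlinarith [zsummand_pos hw μ k, (k.2.cast_nonneg : (0 : ℝ) ≤ k.2)],
      h.of_nonneg_of_le (fun k => by positivity [zsummand_pos hw μ k])
        fun k => by nlinarith [zsummand_pos hw μ k, (k.1.cast_nonneg : (0 : ℝ) ≤ k.1)]⟩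
  obtain ⟨t, ht, hlt⟩ := exists_tsum_exp_neg_mul_lt (fun k => (zsummand_pos hw μ k).le)
    (fun k => by positivity) hμ hmoment (ρ.1 + ρ.2)
  have hshift : zsummand w (μ.1 - t, μ.2 - t) =
      fun k => exp (-(t * (k.1 + k.2))) * zsummand w μ k := funext (zsummand_shift μ t)
  have hμt : (μ.1 - t, μ.2 - t) ∈ domz w :=
    show Summable _ from hshift ▸ hμ.of_nonneg_of_le
      (fun k => mul_nonneg (exp_pos _).le (zsummand_pos hw μ k).le)
      fun k => mul_le_of_le_one_left (zsummand_pos hw μ k).le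
        (exp_le_one_iff.mpr (by nlinarith [(k.1 + k.2 : ℕ).cast_nonneg (α := ℝ)]))
  refine ⟨_, hμt, ?_⟩
  rw [← tsum_congr (congrFun hshift), ← zfun, ← zfun] at hlt
  have := log_lt_log (zfun_pos hw hμt) hlt
  rw [log_mul (exp_pos _).ne' (zfun_pos hw hμ).ne', log_exp] at this
  simp only [press, dotR]
  linarith

lemma mem_Dmu_of_isMaxOn_domz (hw : ∀ k, 0 < w k) {ρ μ : ℝ × ℝ} (hμ : μ ∈ domz w)
    (hmax : IsMaxOn (fun μ => dotR ρ μ - press w μ) (domz w) μ) : μ ∈ Dmu w := by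
  by_contra h
  obtain ⟨μ', hμ', hlt⟩ := exists_lt_of_notMem_Dmu hw ρ hμ h
  exact (isMaxOn_iff.mp hmax μ' hμ').not_gt hlt

/-- `exp (-(ρ·μ - p(μ)))` on `dom z`, extended by `∞` outside it so as to be lower
semicontinuous on all of `ℝ²`. -/
def tiltedPartition (w : ℕ × ℕ → ℝ) (ρ μ : ℝ × ℝ) : ENNReal :=
  ∑' k, ENNReal.ofReal (zsummand w μ k * exp (-dotR ρ μ))

lemma lowerSemicontinuous_tiltedPartition (ρ : ℝ × ℝ) :
    LowerSemicontinuous (tiltedPartition w ρ) :=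
  lowerSemicontinuous_tsum fun _ => (ENNReal.continuous_ofReal.comp
    (by simp only [zsummand, dotNat, dotR]; fun_prop)).lowerSemicontinuous

lemma tiltedPartition_eq (hw : ∀ k, 0 < w k) (ρ : ℝ × ℝ) {μ : ℝ × ℝ} (hμ : μ ∈ domz w) :
    tiltedPartition w ρ μ = ENNReal.ofReal (exp (-(dotR ρ μ - press w μ))) := by
  rw [tiltedPartition, ← ENNReal.ofReal_tsum_of_nonneg
    (fun k => mul_nonneg (zsummand_pos hw μ k).le (exp_pos _).le) (hμ.mul_right _),
    tsum_mul_right, ← zfun, press, neg_sub, exp_sub, exp_log (zfun_pos hw hμ), exp_neg,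
    div_eq_mul_inv]

lemma mem_domz_of_tiltedPartition_ne_top (hw : ∀ k, 0 < w k) {ρ μ : ℝ × ℝ}
    (h : tiltedPartition w ρ μ ≠ ⊤) : μ ∈ domz w := by
  have := ENNReal.summable_toReal h
  simp only [ENNReal.toReal_ofReal (mul_nonneg (zsummand_pos hw μ _).le (exp_pos _).le)] at this
  exact (summable_mul_right_iff (exp_pos _).ne').mp this

lemma dotNat_sub_dotR_le_of_tiltedPartition_le (hw : ∀ k, 0 < w k) {ρ μ : ℝ × ℝ}
    {C : ENNReal} (hC : C ≠ ⊤) (hμ : tiltedPartition w ρ μ ≤ C) (k : ℕ × ℕ) :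
    dotNat μ k - dotR ρ μ ≤ log C.toReal - log (w k) := by
  have h := (ENNReal.ofReal_le_iff_le_toReal hC).mp ((ENNReal.le_tsum k).trans hμ)
  rw [zsummand, mul_assoc, ← exp_add] at h
  have := log_le_log (by positivity [hw k]) h
  rw [log_mul (hw k).ne' (exp_pos _).ne', log_exp] at this
  linarith

lemma isBounded_setOf_dotR_le {ρ : ℝ × ℝ} (h₁ : 0 < ρ.1) (h₂ : 0 < ρ.2) {n : ℝ}
    (hn : ρ.1 + ρ.2 + 1 ≤ n) (a : ℝ) :
    Bornology.IsBounded
      {μ : ℝ × ℝ | -dotR ρ μ ≤ a ∧ n * μ.1 - dotR ρ μ ≤ a ∧ n * μ.2 - dotR ρ μ ≤ a} := by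
  set U := (1 + ρ.1 + ρ.2) * |a|
  refine (Metric.isBounded_Icc ((-(|a| + ρ.2 * U)) / ρ.1, (-(|a| + ρ.1 * U)) / ρ.2)
    (U, U)).subset ?_
  rintro μ ⟨h0, hx, hy⟩
  simp only [dotR] at h0 hx hy
  have ha := le_abs_self a
  have ha' := neg_abs_le a
  -- `(n - ρ₁ - ρ₂) (ρ·μ) = ρ₁ (n μ₁ - ρ·μ) + ρ₂ (n μ₂ - ρ·μ)` bounds `ρ·μ` from above
  have hsum : (n - ρ.1 - ρ.2) * (ρ.1 * μ.1 + ρ.2 * μ.2) ≤ (ρ.1 + ρ.2) * |a| := by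
    nlinarith [mul_le_mul_of_nonneg_left hx h₁.le, mul_le_mul_of_nonneg_left hy h₂.le]
  have hs : ρ.1 * μ.1 + ρ.2 * μ.2 ≤ (ρ.1 + ρ.2) * |a| := by
    by_contra! h
    have hc : 0 ≤ (ρ.1 + ρ.2) * |a| := by positivity
    nlinarith [mul_le_mul_of_nonneg_right (show 1 ≤ n - ρ.1 - ρ.2 by linarith) (hc.trans h.le)]
  have hU₁ : μ.1 ≤ U := by nlinarith
  have hU₂ : μ.2 ≤ U := by nlinarith
  refine ⟨⟨?_, ?_⟩, ⟨hU₁, hU₂⟩⟩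
  · rw [div_le_iff₀ h₁]; nlinarith
  · rw [div_le_iff₀ h₂]; nlinarith

lemma isCompact_tiltedPartition_le (hw : ∀ k, 0 < w k) {ρ : ℝ × ℝ} (h₁ : 0 < ρ.1) (h₂ : 0 < ρ.2)
    {C : ENNReal} (hC : C ≠ ⊤) : IsCompact {μ | tiltedPartition w ρ μ ≤ C} := by
  set n := ⌈ρ.1 + ρ.2⌉₊ + 1
  have hn : ρ.1 + ρ.2 + 1 ≤ n := by push_cast [n]; linarith [Nat.le_ceil (ρ.1 + ρ.2)]
  set a₀ := log C.toReal - log (w 0)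
  set a₁ := log C.toReal - log (w (n, 0))
  set a₂ := log C.toReal - log (w (0, n))
  refine Metric.isCompact_of_isClosed_isBounded
    ((lowerSemicontinuous_tiltedPartition ρ).isClosed_preimage C)
    ((isBounded_setOf_dotR_le h₁ h₂ hn (max a₀ (max a₁ a₂))).subset fun μ hμ => ?_)
  have hk := dotNat_sub_dotR_le_of_tiltedPartition_le hw hC hμ
  have h0 := hk 0
  have hx := hk (n, 0)
  have hy := hk (0, n)
  simp only [dotNat, Prod.fst_zero, Prod.snd_zero, CharP.cast_eq_zero, mul_zero,
    add_zero, zero_add] at h0 hx hy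
  have := le_max_left a₀ (max a₁ a₂)
  have := le_max_right a₀ (max a₁ a₂)
  have := le_max_left a₁ a₂
  have := le_max_right a₁ a₂
  exact ⟨by linarith, by linarith, by linarith⟩

lemma exists_isMaxOn_domz (hw : ∀ k, 0 < w k) (hexp : ExpBounded w) {ρ : ℝ × ℝ}
    (h₁ : 0 < ρ.1) (h₂ : 0 < ρ.2) :
    ∃ μ ∈ domz w, IsMaxOn (fun μ => dotR ρ μ - press w μ) (domz w) μ := by
  obtain ⟨μ₀, hμ₀⟩ := domz_nonempty hw hexp
  set C := tiltedPartition w ρ μ₀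
  have hC : C ≠ ⊤ := by simp [C, tiltedPartition_eq hw ρ hμ₀]
  have hμ₀C : μ₀ ∈ {μ | tiltedPartition w ρ μ ≤ C} := le_refl C
  obtain ⟨μ, hμC, hmin⟩ := ((lowerSemicontinuous_tiltedPartition ρ).lowerSemicontinuousOn
    _).exists_isMinOn (Set.nonempty_of_mem hμ₀C) (isCompact_tiltedPartition_le hw h₁ h₂ hC)
  have hμ := mem_domz_of_tiltedPartition_ne_top hw (ne_top_of_le_ne_top hC hμC)
  refine ⟨μ, hμ, isMaxOn_iff.mpr fun ν hν => ?_⟩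
  have hle : tiltedPartition w ρ μ ≤ tiltedPartition w ρ ν := by
    by_cases hνC : tiltedPartition w ρ ν ≤ C
    · exact isMinOn_iff.mp hmin ν hνC
    · exact hμC.trans (le_of_not_ge hνC)
  rw [tiltedPartition_eq hw ρ hμ, tiltedPartition_eq hw ρ hν,
    ENNReal.ofReal_le_ofReal_iff (exp_pos _).le, exp_le_exp] at hle
  linarith

lemma exists_isMaxOn_Dmu (hw : ∀ k, 0 < w k) (hexp : ExpBounded w) {ρ : ℝ × ℝ}
    (h₁ : 0 < ρ.1) (h₂ : 0 < ρ.2) :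
    ∃ μ ∈ Dmu w, IsMaxOn (fun μ => dotR ρ μ - press w μ) (Dmu w) μ := by
  obtain ⟨μ, hμ, hmax⟩ := exists_isMaxOn_domz hw hexp h₁ h₂
  exact ⟨μ, mem_Dmu_of_isMaxOn_domz hw hμ hmax, hmax.on_subset (Dmu_subset_domz hw)⟩

end

/-- For every `ρ ∈ (0,∞)²` the supremum defining the entropy
`s(ρ) = sup_{μ ∈ D_μ} (ρ·μ - p(μ))` is attained at a unique point `μ̄ ∈ D_μ`
(hence is finite); moreover if `ρ ∈ D_ρ = R(D_μ)` then `R(μ̄) = ρ`. -/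
theorem statement9 (w : ℕ × ℕ → ℝ) (hw : ∀ k, 0 < w k) (hexp : ExpBounded w)
    (ρ : ℝ × ℝ) (h1 : 0 < ρ.1) (h2 : 0 < ρ.2) :
    ∃ μb : ℝ × ℝ,
      (μb ∈ Dmu w ∧ ∀ μ ∈ Dmu w, dotR ρ μ - press w μ ≤ dotR ρ μb - press w μb) ∧
      (∀ μ' : ℝ × ℝ,
        (μ' ∈ Dmu w ∧ ∀ μ ∈ Dmu w, dotR ρ μ - press w μ ≤ dotR ρ μ' - press w μ') →
        μ' = μb) ∧
      (ρ ∈ Rmap w '' Dmu w → Rmap w μb = ρ) := by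
  obtain ⟨μb, hμb, hmax⟩ := exists_isMaxOn_Dmu hw hexp h1 h2
  refine ⟨μb, ⟨hμb, isMaxOn_iff.mp hmax⟩, fun μ' ⟨hμ', hmax'⟩ =>
    eq_of_isMaxOn_Dmu hw hμ' hμb (isMaxOn_iff.mpr hmax') hmax, ?_⟩
  rintro ⟨μ₀, hμ₀, rfl⟩
  rw [eq_of_isMaxOn_Dmu hw hμb hμ₀ hmax (isMaxOn_Rmap hw hμ₀)]
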